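/- arXiv:math/0610038 — 6 statements merged into one kernel-verified Lean document; each statement's English description precedes it below -/
import Mathlib

section
/- For a finite Borel measure μ on ℝ^d, 1 < q < ∞, every natural number n, and every ε > 0, one has 0 ≤ ln(S_μ^q(ε)) − ln(S_μ^q(2^{-n}ε)) ≤ n·ln(2^{d(q-1)}). -/
/-! Each grid cube of side `ε` is the disjoint union of `2^d` grid cubes of side `ε / 2`.
Superadditivity of `t ↦ t^q` on that union gives `S(ε/2) ≤ S(ε)`, and the power-mean inequality
`(∑ⱼ aⱼ)^q ≤ (2^d)^(q-1) ∑ⱼ aⱼ^q` gives `S(ε) ≤ 2^(d(q-1)) S(ε/2)`. Taking logarithms, each halving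
of the scale changes `log S` by an amount in `[0, log 2^(d(q-1))]`, and `n` halvings telescope.
The logarithms are taken of positive reals because `0 < S(ε) ≤ μ(ℝ^d)^q`. -/

open MeasureTheory Set Function
open scoped ENNReal

namespace ENNReal

theorem sum_rpow_le_rpow_sum {ι : Type*} (s : Finset ι) (f : ι → ℝ≥0∞) {p : ℝ} (hp : 1 ≤ p) :
    ∑ i ∈ s, f i ^ p ≤ (∑ i ∈ s, f i) ^ p := by
  classical
  induction s using Finset.induction_on with
  | empty => simp
  | insert i s hi ih =>
    rw [Finset.sum_insert hi, Finset.sum_insert hi]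
    calc f i ^ p + ∑ j ∈ s, f j ^ p ≤ f i ^ p + (∑ j ∈ s, f j) ^ p := add_le_add_right ih _
      _ ≤ (f i + ∑ j ∈ s, f j) ^ p := add_rpow_le_rpow_add _ _ hp

theorem tsum_rpow_le_rpow_tsum {ι : Type*} (f : ι → ℝ≥0∞) {p : ℝ} (hp : 1 ≤ p) :
    ∑' i, f i ^ p ≤ (∑' i, f i) ^ p := by
  rw [ENNReal.tsum_eq_iSup_sum]
  refine iSup_le fun s => (sum_rpow_le_rpow_sum s f hp).trans ?_
  exact rpow_le_rpow (ENNReal.sum_le_tsum s) (by linarith)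

end ENNReal

theorem Real.log_sub_log_bounds_of_le_of_le_mul {a b c : ℝ} (hb : 0 < b) (hba : b ≤ a)
    (hab : a ≤ c * b) : 0 ≤ Real.log a - Real.log b ∧ Real.log a - Real.log b ≤ Real.log c := by
  have hc : 0 < c := pos_of_mul_pos_left (hb.trans_le (hba.trans hab)) hb.le
  have hlog := Real.log_le_log (hb.trans_le hba) hab
  rw [Real.log_mul hc.ne' hb.ne'] at hlog
  exact ⟨sub_nonneg.2 (Real.log_le_log hb hba), by linarith⟩

theorem bounds_sub_two_rpow_neg_mul_of_halving {g : ℝ → ℝ} {b : ℝ}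
    (hg : ∀ δ, 0 < δ → 0 ≤ g δ - g (δ / 2) ∧ g δ - g (δ / 2) ≤ b) (n : ℕ) {ε : ℝ} (hε : 0 < ε) :
    0 ≤ g ε - g (2 ^ (-(n : ℝ)) * ε) ∧ g ε - g (2 ^ (-(n : ℝ)) * ε) ≤ n * b := by
  induction n with
  | zero => simp
  | succ n ih =>
    have hδ : 0 < (2 : ℝ) ^ (-(n : ℝ)) * ε := by positivity
    have hhalf : (2 : ℝ) ^ (-((n + 1 : ℕ) : ℝ)) * ε = (2 : ℝ) ^ (-(n : ℝ)) * ε / 2 := by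
      rw [Nat.cast_succ, neg_add, Real.rpow_add two_pos, Real.rpow_neg_one]
      ring
    obtain ⟨hstep₁, hstep₂⟩ := hg _ hδ
    rw [hhalf, Nat.cast_succ]
    constructor <;> linarith [ih.1, ih.2]

variable {ι : Type*}

def gridCube (ε : ℝ) (k : ι → ℤ) : Set (ι → ℝ) :=
  {x | ∀ i, ε * (k i : ℝ) ≤ x i ∧ x i < ε * ((k i : ℝ) + 1)}

theorem gridCube_eq_pi (ε : ℝ) (k : ι → ℤ) :
    gridCube ε k = univ.pi fun i => Ico (ε * k i) (ε * (k i + 1)) := by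
  ext x
  simp [gridCube]

theorem measurableSet_gridCube [Countable ι] (ε : ℝ) (k : ι → ℤ) :
    MeasurableSet (gridCube ε k) := by
  rw [gridCube_eq_pi]
  exact MeasurableSet.univ_pi fun _ => measurableSet_Ico

theorem pairwise_disjoint_gridCube {ε : ℝ} (hε : 0 < ε) :
    Pairwise (Disjoint on gridCube (ι := ι) ε) := by
  intro k k' hkk'
  obtain ⟨i, hi⟩ := ne_iff.1 hkk'
  rw [onFun, Set.disjoint_left]
  intro x hx hx'
  obtain ⟨h₁, h₂⟩ := hx i
  obtain ⟨h₁', h₂'⟩ := hx' i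
  rcases hi.lt_or_gt with h | h
  · have : (k i : ℝ) + 1 ≤ k' i := by exact_mod_cast h
    nlinarith
  · have : (k' i : ℝ) + 1 ≤ k i := by exact_mod_cast h
    nlinarith

theorem iUnion_gridCube {ε : ℝ} (hε : 0 < ε) : ⋃ k : ι → ℤ, gridCube ε k = univ := by
  refine eq_univ_of_forall fun x => mem_iUnion.2 ⟨fun i => ⌊x i / ε⌋, fun i => ?_⟩
  have h₁ := Int.floor_le (x i / ε)
  have h₂ := Int.lt_floor_add_one (x i / ε)
  rw [le_div_iff₀ hε] at h₁
  rw [div_lt_iff₀ hε] at h₂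
  constructor <;> linarith

theorem tsum_measure_gridCube [Finite ι] (μ : Measure (ι → ℝ)) {ε : ℝ} (hε : 0 < ε) :
    ∑' k, μ (gridCube ε k) = μ univ := by
  rw [← measure_iUnion (pairwise_disjoint_gridCube hε) (measurableSet_gridCube ε),
    iUnion_gridCube hε]

variable (ι) in
def dyadicChildEquiv : (ι → ℤ) × (ι → Bool) ≃ (ι → ℤ) where
  toFun p i := 2 * p.1 i + (p.2 i).toNat
  invFun m := (fun i => m i / 2, fun i => decide (m i % 2 = 1))
  left_inv := by
    rintro ⟨k, j⟩
    ext i <;> cases h : j i <;> simp [h]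
    omega
  right_inv m := by
    ext i
    by_cases h : m i % 2 = 1 <;> simp [h] <;> omega

theorem gridCube_eq_iUnion_half {ε : ℝ} (hε : 0 < ε) (k : ι → ℤ) :
    gridCube ε k = ⋃ j : ι → Bool, gridCube (ε / 2) (dyadicChildEquiv ι (k, j)) := by
  ext x
  simp only [mem_iUnion, gridCube, mem_ofPred_eq, dyadicChildEquiv, Equiv.coe_fn_mk]
  constructor
  · intro h
    refine ⟨fun i => decide (ε * k i + ε / 2 ≤ x i), fun i => ?_⟩
    obtain ⟨h₁, h₂⟩ := h i
    by_cases hc : ε * k i + ε / 2 ≤ x i <;> simp [hc] <;> constructor <;> nlinarith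
  · rintro ⟨j, hj⟩ i
    obtain ⟨h₁, h₂⟩ := hj i
    cases h : j i <;> simp [h] at h₁ h₂ <;> constructor <;> nlinarith

theorem measure_gridCube_eq_tsum_half [Finite ι] (μ : Measure (ι → ℝ)) {ε : ℝ} (hε : 0 < ε)
    (k : ι → ℤ) :
    μ (gridCube ε k) = ∑' j, μ (gridCube (ε / 2) (dyadicChildEquiv ι (k, j))) := by
  rw [gridCube_eq_iUnion_half hε k, measure_iUnion _ fun j => measurableSet_gridCube _ _]
  exact fun j j' hjj' => pairwise_disjoint_gridCube (half_pos hε)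
    fun h => hjj' (congrArg Prod.snd ((dyadicChildEquiv ι).injective h))

noncomputable def gridSum (μ : Measure (ι → ℝ)) (q ε : ℝ) : ℝ≥0∞ :=
  ∑' k : ι → ℤ, μ (gridCube ε k) ^ q

variable (μ : Measure (ι → ℝ)) {q ε : ℝ}

theorem gridSum_half_eq_tsum_tsum :
    gridSum μ q (ε / 2) =
      ∑' k, ∑' j, μ (gridCube (ε / 2) (dyadicChildEquiv ι (k, j))) ^ q := by
  rw [gridSum, ← (dyadicChildEquiv ι).tsum_eq]
  exact ENNReal.tsum_prod (f := fun k j => μ (gridCube (ε / 2) (dyadicChildEquiv ι (k, j))) ^ q)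

variable [Finite ι]

theorem gridSum_half_le (hq : 1 ≤ q) (hε : 0 < ε) : gridSum μ q (ε / 2) ≤ gridSum μ q ε := by
  rw [gridSum_half_eq_tsum_tsum]
  refine ENNReal.tsum_le_tsum fun k => ?_
  rw [measure_gridCube_eq_tsum_half μ hε k]
  exact ENNReal.tsum_rpow_le_rpow_tsum _ hq

theorem gridSum_le_two_rpow_mul_half (hq : 1 ≤ q) (hε : 0 < ε) :
    gridSum μ q ε ≤ 2 ^ (Nat.card ι * (q - 1)) * gridSum μ q (ε / 2) := by
  classical
  have := Fintype.ofFinite ι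
  have hcard : ((Finset.univ : Finset (ι → Bool)).card : ℝ≥0∞) ^ (q - 1) =
      2 ^ (Nat.card ι * (q - 1)) := by
    simp [ENNReal.rpow_mul, Nat.card_eq_fintype_card]
  rw [gridSum_half_eq_tsum_tsum, ← ENNReal.tsum_mul_left]
  refine ENNReal.tsum_le_tsum fun k => ?_
  rw [measure_gridCube_eq_tsum_half μ hε k, tsum_fintype, tsum_fintype, ← hcard]
  exact ENNReal.rpow_sum_le_const_mul_sum_rpow _ _ hq

theorem gridSum_le_measure_univ_rpow (hq : 1 ≤ q) (hε : 0 < ε) : gridSum μ q ε ≤ μ univ ^ q := by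
  rw [← tsum_measure_gridCube μ hε]
  exact ENNReal.tsum_rpow_le_rpow_tsum _ hq

theorem gridSum_ne_top [IsFiniteMeasure μ] (hq : 1 ≤ q) (hε : 0 < ε) : gridSum μ q ε ≠ ⊤ :=
  ne_top_of_le_ne_top (ENNReal.rpow_ne_top_of_nonneg (by linarith) (measure_ne_top μ univ))
    (gridSum_le_measure_univ_rpow μ hq hε)

theorem gridSum_ne_zero (hμ : μ univ ≠ 0) (hq : 0 < q) (hε : 0 < ε) : gridSum μ q ε ≠ 0 := by
  intro h
  rw [gridSum, ENNReal.tsum_eq_zero] at h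
  refine hμ ?_
  rw [← tsum_measure_gridCube μ hε, ENNReal.tsum_eq_zero]
  exact fun k => (ENNReal.rpow_eq_zero_iff_of_pos hq).1 (h k)

theorem stmt3 (d : ℕ) (μ : Measure (Fin d → ℝ)) [IsFiniteMeasure μ]
    (hμ : μ univ ≠ 0) (q : ℝ) (hq : 1 < q)
    (S : ℝ → ℝ)
    (hS : ∀ ε : ℝ, S ε = (∑' k : Fin d → ℤ,
        (μ {x | ∀ i, ε * (k i : ℝ) ≤ x i ∧ x i < ε * ((k i : ℝ) + 1)}) ^ q).toReal)
    (n : ℕ) (ε : ℝ) (hε : 0 < ε) :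
    0 ≤ Real.log (S ε) - Real.log (S (2 ^ (-(n : ℝ)) * ε)) ∧
      Real.log (S ε) - Real.log (S (2 ^ (-(n : ℝ)) * ε))
        ≤ n * Real.log (2 ^ ((d : ℝ) * (q - 1))) := by
  refine bounds_sub_two_rpow_neg_mul_of_halving (g := fun δ => Real.log (S δ))
    (fun δ hδ => ?_) n hε
  have hfin : ∀ δ, 0 < δ → gridSum μ q δ ≠ ⊤ := fun δ hδ => gridSum_ne_top μ hq.le hδ
  have hhalf := half_pos hδ
  rw [hS, hS]
  refine Real.log_sub_log_bounds_of_le_of_le_mul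
    (ENNReal.toReal_pos (gridSum_ne_zero μ hμ (by linarith) hhalf) (hfin _ hhalf))
    ((ENNReal.toReal_le_toReal (hfin _ hhalf) (hfin δ hδ)).2 (gridSum_half_le μ hq.le hδ)) ?_
  calc (gridSum μ q δ).toReal
      ≤ (2 ^ ((d : ℝ) * (q - 1)) * gridSum μ q (δ / 2)).toReal := by
        refine ENNReal.toReal_mono (ENNReal.mul_ne_top ?_ (hfin _ hhalf)) ?_
        · exact ENNReal.rpow_ne_top_of_nonneg (mul_nonneg d.cast_nonneg (by linarith))
            ENNReal.ofNat_ne_top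
        · simpa using gridSum_le_two_rpow_mul_half μ hq.le hδ
    _ = 2 ^ ((d : ℝ) * (q - 1)) * (gridSum μ q (δ / 2)).toReal := by
        rw [ENNReal.toReal_mul, ← ENNReal.toReal_rpow, ENNReal.toReal_ofNat]
end

section
/- For a finite Borel measure μ on ℝ^d, 0 < q < 1 with μ being q-finite, every natural number n, and every ε > 0, one has n·ln(2^{d(q-1)}) ≤ ln(S_μ^q(ε)) − ln(S_μ^q(2^{-n}ε)) ≤ 0. -/
/-! Every grid cube `Q` of side `ε` is the disjoint union of `N ^ d` grid cubes `Qᵢ` of side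
`ε / N`. For `0 < q ≤ 1`, subadditivity of `t ↦ t ^ q` gives `μ Q ^ q ≤ ∑ μ Qᵢ ^ q`, and Hölder's
inequality gives `∑ μ Qᵢ ^ q ≤ (N ^ d) ^ (1 - q) * μ Q ^ q`. Summing over `Q`,
`S ε ≤ S (ε / N) ≤ N ^ (d (1 - q)) S ε`; take `N = 2 ^ n` and logarithms. -/

open MeasureTheory Set

open scoped ENNReal

namespace ENNReal

theorem rpow_sum_le_sum_rpow {ι : Type*} (s : Finset ι) (a : ι → ℝ≥0∞) {q : ℝ}
    (hq0 : 0 < q) (hq1 : q ≤ 1) :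
    (∑ i ∈ s, a i) ^ q ≤ ∑ i ∈ s, a i ^ q := by
  induction s using Finset.cons_induction with
  | empty => simp [zero_rpow_of_pos hq0]
  | cons i s his ih =>
    rw [Finset.sum_cons, Finset.sum_cons]
    calc (a i + ∑ j ∈ s, a j) ^ q ≤ a i ^ q + (∑ j ∈ s, a j) ^ q :=
          rpow_add_le_add_rpow _ _ hq0.le hq1
      _ ≤ a i ^ q + ∑ j ∈ s, a j ^ q := by gcongr

theorem sum_rpow_le_card_rpow_mul_rpow_sum {ι : Type*} (s : Finset ι) (a : ι → ℝ≥0∞) {q : ℝ}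
    (hq0 : 0 < q) (hq1 : q ≤ 1) :
    ∑ i ∈ s, a i ^ q ≤ (s.card : ℝ≥0∞) ^ (1 - q) * (∑ i ∈ s, a i) ^ q := by
  have h := rpow_sum_le_const_mul_sum_rpow s (fun i => a i ^ q) (one_le_one_div hq0 hq1)
  simp only [← rpow_mul, mul_one_div_cancel hq0.ne', rpow_one] at h
  calc ∑ i ∈ s, a i ^ q = ((∑ i ∈ s, a i ^ q) ^ (1 / q)) ^ q := by
        rw [← rpow_mul, one_div_mul_cancel hq0.ne', rpow_one]
    _ ≤ ((s.card : ℝ≥0∞) ^ (1 / q - 1) * ∑ i ∈ s, a i) ^ q := by gcongr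
    _ = (s.card : ℝ≥0∞) ^ (1 - q) * (∑ i ∈ s, a i) ^ q := by
        rw [mul_rpow_of_nonneg _ _ hq0.le, ← rpow_mul, sub_mul, one_div_mul_cancel hq0.ne',
          one_mul]

end ENNReal

namespace CubeGrid

open Function

def cube (d : ℕ) (ε : ℝ) (k : Fin d → ℤ) : Set (Fin d → ℝ) :=
  {x | ∀ i, ε * (k i : ℝ) ≤ x i ∧ x i < ε * ((k i : ℝ) + 1)}

variable {d : ℕ} {ε : ℝ}

theorem mem_cube_iff (hε : 0 < ε) {x : Fin d → ℝ} {k : Fin d → ℤ} :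
    x ∈ cube d ε k ↔ (fun i => ⌊x i / ε⌋) = k := by
  simp only [cube, mem_ofPred_eq, funext_iff, Int.floor_eq_iff, le_div_iff₀ hε, div_lt_iff₀ hε,
    mul_comm ε]

theorem pairwise_disjoint_cube (hε : 0 < ε) : Pairwise (Disjoint on (cube d ε)) := by
  intro k l hkl
  refine disjoint_left.2 fun x hk hl => hkl ?_
  rw [← (mem_cube_iff hε).1 hk, (mem_cube_iff hε).1 hl]

theorem measurableSet_cube (d : ℕ) (ε : ℝ) (k : Fin d → ℤ) : MeasurableSet (cube d ε k) := by
  have : cube d ε k = univ.pi fun i => Ico (ε * k i) (ε * (k i + 1)) := by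
    ext x; simp [cube, Set.mem_pi, mem_Ico]
  rw [this]
  exact MeasurableSet.univ_pi fun i => measurableSet_Ico

theorem iUnion_cube (hε : 0 < ε) : ⋃ k, cube d ε k = univ :=
  eq_univ_of_forall fun _ => mem_iUnion.2 ⟨_, (mem_cube_iff hε).2 rfl⟩

/-- The sum `S_μ^q(ε)`. -/
noncomputable def gridSum (d : ℕ) (μ : Measure (Fin d → ℝ)) (q ε : ℝ) : ℝ≥0∞ :=
  ∑' k : Fin d → ℤ, μ (cube d ε k) ^ q

/-- Coordinatewise `k ↦ (k / N, k % N)`: the coarse cube of side `ε` containing the fine cube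
`k` of side `ε / N`, and the position of `k` inside it. -/
def refineEquiv (d N : ℕ) [NeZero N] : (Fin d → ℤ) ≃ (Fin d → ℤ) × (Fin d → Fin N) :=
  (Equiv.piCongrRight fun _ => Int.divModEquiv N).trans (Equiv.arrowProdEquivProdArrow _ _ _)

theorem floor_div_refineEquiv_fst (N : ℕ) [NeZero N] (x : Fin d → ℝ) :
    (refineEquiv d N fun i => ⌊x i / (ε / N)⌋).1 = fun i => ⌊x i / ε⌋ := by
  ext i
  have hN : (N : ℝ) ≠ 0 := Nat.cast_ne_zero.2 (NeZero.ne N)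
  change ⌊x i / (ε / N)⌋ / (N : ℤ) = ⌊x i / ε⌋
  rw [← Int.floor_div_natCast, div_div, div_mul_cancel₀ _ hN]

theorem cube_eq_iUnion_cube_div (N : ℕ) [NeZero N] (hε : 0 < ε) (m : Fin d → ℤ) :
    cube d ε m = ⋃ r, cube d (ε / N) ((refineEquiv d N).symm (m, r)) := by
  have hεN : 0 < ε / N := div_pos hε (Nat.cast_pos.2 (Nat.pos_of_neZero N))
  ext x
  simp [mem_cube_iff hε, mem_cube_iff hεN, Equiv.eq_symm_apply, Prod.ext_iff,
    floor_div_refineEquiv_fst]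

variable (μ : Measure (Fin d → ℝ)) (N : ℕ) [NeZero N]

theorem measure_cube_eq_sum (hε : 0 < ε) (m : Fin d → ℤ) :
    μ (cube d ε m) = ∑ r, μ (cube d (ε / N) ((refineEquiv d N).symm (m, r))) := by
  have hεN : 0 < ε / N := div_pos hε (Nat.cast_pos.2 (Nat.pos_of_neZero N))
  have hdisj : Pairwise (Disjoint on fun r => cube d (ε / N) ((refineEquiv d N).symm (m, r))) :=
    (pairwise_disjoint_cube hεN).comp_of_injective
    ((refineEquiv d N).symm.injective.comp (Prod.mk_right_injective m))
  rw [cube_eq_iUnion_cube_div N hε m,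
    measure_iUnion hdisj fun _ => measurableSet_cube _ _ _, tsum_fintype]

theorem gridSum_div_eq (q : ℝ) :
    gridSum d μ q (ε / N) =
      ∑' m, ∑ r, μ (cube d (ε / N) ((refineEquiv d N).symm (m, r))) ^ q := by
  rw [gridSum, ← (refineEquiv d N).symm.tsum_eq, ENNReal.tsum_prod']
  simp only [tsum_fintype]

theorem gridSum_le_gridSum_div (hε : 0 < ε) {q : ℝ} (hq0 : 0 < q) (hq1 : q ≤ 1) :
    gridSum d μ q ε ≤ gridSum d μ q (ε / N) := by
  rw [gridSum_div_eq]
  refine ENNReal.tsum_le_tsum fun m => ?_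
  rw [measure_cube_eq_sum μ N hε]
  exact ENNReal.rpow_sum_le_sum_rpow _ _ hq0 hq1

theorem gridSum_div_le (hε : 0 < ε) {q : ℝ} (hq0 : 0 < q) (hq1 : q ≤ 1) :
    gridSum d μ q (ε / N) ≤ ((N : ℝ≥0∞) ^ d) ^ (1 - q) * gridSum d μ q ε := by
  rw [gridSum_div_eq, gridSum, ← ENNReal.tsum_mul_left]
  refine ENNReal.tsum_le_tsum fun m => ?_
  rw [measure_cube_eq_sum μ N hε]
  simpa using ENNReal.sum_rpow_le_card_rpow_mul_rpow_sum (Finset.univ : Finset (Fin d → Fin N))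
    _ hq0 hq1

theorem gridSum_ne_zero (hμ : μ univ ≠ 0) (hε : 0 < ε) {q : ℝ} (hq : 0 < q) :
    gridSum d μ q ε ≠ 0 := by
  refine fun h => hμ ?_
  rw [← iUnion_cube hε, measure_iUnion_null_iff]
  exact fun k => (ENNReal.rpow_eq_zero_iff_of_pos hq).1 (ENNReal.tsum_eq_zero.1 h k)

end CubeGrid

open CubeGrid

theorem stmt4_general (d : ℕ) (μ : Measure (Fin d → ℝ))
    (hμ : μ univ ≠ 0) (q : ℝ) (hq0 : 0 < q) (hq1 : q < 1)
    (hqfin : ∀ ε : ℝ, 0 < ε → (∑' k : Fin d → ℤ,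
        (μ {x | ∀ i, ε * (k i : ℝ) ≤ x i ∧ x i < ε * ((k i : ℝ) + 1)}) ^ q) < ⊤)
    (S : ℝ → ℝ)
    (hS : ∀ ε : ℝ, S ε = (∑' k : Fin d → ℤ,
        (μ {x | ∀ i, ε * (k i : ℝ) ≤ x i ∧ x i < ε * ((k i : ℝ) + 1)}) ^ q).toReal)
    (n : ℕ) (ε : ℝ) (hε : 0 < ε) :
    (n : ℝ) * Real.log (2 ^ ((d : ℝ) * (q - 1)))
        ≤ Real.log (S ε) - Real.log (S (2 ^ (-(n : ℝ)) * ε)) ∧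
      Real.log (S ε) - Real.log (S (2 ^ (-(n : ℝ)) * ε)) ≤ 0 := by
  have hS' : ∀ ε, S ε = (gridSum d μ q ε).toReal := hS
  have hfin : ∀ ε, 0 < ε → gridSum d μ q ε ≠ ⊤ := fun ε hε => (hqfin ε hε).ne
  have hSpos : ∀ ε, 0 < ε → 0 < S ε := fun ε hε => by
    rw [hS']
    exact ENNReal.toReal_pos (gridSum_ne_zero μ hμ hε hq0) (hfin ε hε)
  have hεn : (2 : ℝ) ^ (-(n : ℝ)) * ε = ε / (2 ^ n : ℕ) := by
    rw [Real.rpow_neg zero_le_two, Real.rpow_natCast]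
    push_cast
    ring
  have hεN : 0 < ε / (2 ^ n : ℕ) := by positivity
  have hmono : S ε ≤ S (ε / (2 ^ n : ℕ)) := by
    rw [hS', hS', ENNReal.toReal_le_toReal (hfin _ hε) (hfin _ hεN)]
    exact gridSum_le_gridSum_div μ _ hε hq0 hq1.le
  have hgrowth : S (ε / (2 ^ n : ℕ)) ≤ (((2 : ℝ) ^ n) ^ d) ^ (1 - q) * S ε := by
    have h := (ENNReal.toReal_le_toReal (hfin _ hεN)
      (ENNReal.mul_ne_top (by finiteness) (hfin _ hε))).2
      (gridSum_div_le μ (2 ^ n) hε hq0 hq1.le)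
    simpa [hS', ENNReal.toReal_mul, ← ENNReal.toReal_rpow] using h
  rw [hεn]
  have hlow := Real.log_le_log (hSpos _ hε) hmono
  have hup := Real.log_le_log (hSpos _ hεN) hgrowth
  rw [Real.log_mul (by positivity) (hSpos _ hε).ne', Real.log_rpow (by positivity),
    Real.log_pow, Real.log_pow] at hup
  rw [Real.log_rpow two_pos]
  constructor <;> linarith

theorem stmt4 (d : ℕ) (μ : Measure (Fin d → ℝ)) [IsFiniteMeasure μ]
    (hμ : μ univ ≠ 0) (q : ℝ) (hq0 : 0 < q) (hq1 : q < 1)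
    (hqfin : ∀ ε : ℝ, 0 < ε → (∑' k : Fin d → ℤ,
        (μ {x | ∀ i, ε * (k i : ℝ) ≤ x i ∧ x i < ε * ((k i : ℝ) + 1)}) ^ q) < ⊤)
    (S : ℝ → ℝ)
    (hS : ∀ ε : ℝ, S ε = (∑' k : Fin d → ℤ,
        (μ {x | ∀ i, ε * (k i : ℝ) ≤ x i ∧ x i < ε * ((k i : ℝ) + 1)}) ^ q).toReal)
    (n : ℕ) (ε : ℝ) (hε : 0 < ε) :
    (n : ℝ) * Real.log (2 ^ ((d : ℝ) * (q - 1)))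
        ≤ Real.log (S ε) - Real.log (S (2 ^ (-(n : ℝ)) * ε)) ∧
      Real.log (S ε) - Real.log (S (2 ^ (-(n : ℝ)) * ε)) ≤ 0 :=
  stmt4_general d μ hμ q hq0 hq1 hqfin S hS n ε hε
end

section
/- Let ρ : [0,∞) → ℝ be nearly Lipschitz with constants A, B, let λ > 0, and define M(x) = (6/x³)∫₀ˣ (2t − x)ρ(t) dt for x > 0. Then there exists a constant C such that for all x, y with 1 ≤ x ≤ y ≤ x + λ, |M(x) − M(y)| ≤ C/x. -/
/-!
With the moments `mₙ(x) = ∫₀ˣ tⁿ ρ(t) dt`, the slope is `M x = 12 m₁(x)/x³ - 6 m₀(x)/x²`.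
The near-Lipschitz bound forces linear growth `|ρ t| ≤ R + B t`, hence
`|mₙ(x)| ≤ x^(n+1) (R + B x)` and `|mₙ(y) - mₙ(x)| ≤ (y - x) yⁿ (R + B y)`. Together with
`|x⁻ᵏ - y⁻ᵏ| ≤ k (y - x) / x^(k+1)`, each normalized moment `mₙ(x) / x^(n+2)` therefore
moves by at most `(n + 3) (R + B) (y - x) / x ≤ (n + 3) (R + B) λ / x`.
-/

open MeasureTheory intervalIntegral Set

lemma abs_le_of_abs_sub_le_add_mul {ρ : ℝ → ℝ} {A B : ℝ}
    (h : ∀ x y : ℝ, 0 ≤ x → 0 ≤ y → |ρ x - ρ y| ≤ A + B * |x - y|) {t : ℝ} (ht : 0 ≤ t) :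
    |ρ t| ≤ (|ρ 0| + |A|) + |B| * t := by
  have hsub := h t 0 ht le_rfl
  rw [sub_zero, abs_of_nonneg ht] at hsub
  nlinarith [abs_sub_abs_le_abs_sub (ρ t) (ρ 0), le_abs_self A, le_abs_self B]

lemma abs_inv_pow_sub_inv_pow_le {x y : ℝ} (hx : 0 < x) (hxy : x ≤ y) (m : ℕ) :
    |(x ^ m)⁻¹ - (y ^ m)⁻¹| ≤ m * (y - x) / x ^ (m + 1) := by
  have hy : 0 < y := hx.trans_le hxy
  have hinv : y⁻¹ ≤ x⁻¹ := inv_anti₀ hx hxy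
  have hdiff : |x⁻¹ - y⁻¹| ≤ (y - x) / x ^ 2 := by
    rw [abs_of_nonneg (sub_nonneg.2 hinv), inv_sub_inv hx.ne' hy.ne', pow_two]
    gcongr
  calc |(x ^ m)⁻¹ - (y ^ m)⁻¹| = |x⁻¹ ^ m - y⁻¹ ^ m| := by rw [inv_pow, inv_pow]
    _ ≤ |x⁻¹ - y⁻¹| * m * max |x⁻¹| |y⁻¹| ^ (m - 1) := abs_pow_sub_pow_le _ _ _
    _ ≤ (y - x) / x ^ 2 * m * x⁻¹ ^ (m - 1) := by
      rw [abs_of_pos (inv_pos.2 hx), abs_of_pos (inv_pos.2 hy), max_eq_left hinv]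
      gcongr
    _ = m * (y - x) / x ^ (m + 1) := by
      rcases m with _ | m
      · simp
      · rw [inv_pow, Nat.add_sub_cancel]
        field_simp
        ring

noncomputable def moment (ρ : ℝ → ℝ) (n : ℕ) (x : ℝ) : ℝ :=
  ∫ t in (0 : ℝ)..x, t ^ n * ρ t

section LinearGrowth

variable {ρ : ℝ → ℝ} {R B : ℝ} (hρ : ∀ t, 0 ≤ t → |ρ t| ≤ R + B * t)
include hρ

lemma intervalIntegrable_of_abs_le_linear (hmeas : AEStronglyMeasurable ρ) {a b : ℝ}
    (ha : 0 ≤ a) (hb : 0 ≤ b) : IntervalIntegrable ρ volume a b := by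
  have hg : Continuous fun t => R + B * t := by fun_prop
  refine (hg.intervalIntegrable a b).mono_fun' hmeas.restrict ?_
  filter_upwards [ae_restrict_mem measurableSet_uIoc] with t ht
  exact hρ t ((le_min ha hb).trans ht.1.le)

lemma abs_integral_pow_mul_le (hB : 0 ≤ B) (n : ℕ) {a b : ℝ} (ha : 0 ≤ a) (hab : a ≤ b) :
    |∫ t in a..b, t ^ n * ρ t| ≤ b ^ n * (R + B * b) * (b - a) := by
  have := norm_integral_le_of_norm_le_const (a := a) (b := b) (C := b ^ n * (R + B * b))
    (f := fun t => t ^ n * ρ t) fun t ht => by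
      rw [uIoc_of_le hab] at ht
      have ht0 : 0 ≤ t := ha.trans ht.1.le
      rw [norm_mul, norm_pow, Real.norm_of_nonneg ht0, Real.norm_eq_abs]
      exact mul_le_mul (pow_le_pow_left₀ ht0 ht.2 n)
        ((hρ t ht0).trans (by gcongr; exact ht.2)) (abs_nonneg _) (pow_nonneg (ht0.trans ht.2) n)
  rwa [Real.norm_eq_abs, abs_of_nonneg (sub_nonneg.2 hab)] at this

lemma abs_moment_div_pow_sub_le (hmeas : AEStronglyMeasurable ρ) (hR : 0 ≤ R) (hB : 0 ≤ B)
    (n : ℕ) {x y : ℝ} (hx : 1 ≤ x) (hxy : x ≤ y) :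
    |moment ρ n x / x ^ (n + 2) - moment ρ n y / y ^ (n + 2)| ≤
      (n + 3) * (R + B) * (y - x) / x := by
  have hx0 : 0 < x := one_pos.trans_le hx
  have hy0 : 0 < y := hx0.trans_le hxy
  have hint : ∀ b, 0 ≤ b → IntervalIntegrable (fun t => t ^ n * ρ t) volume 0 b := fun b hb =>
    (intervalIntegrable_of_abs_le_linear hρ hmeas le_rfl hb).continuousOn_mul (by fun_prop)
  have hsmall : |moment ρ n x| ≤ x ^ (n + 1) * (R + B * x) := by
    have := abs_integral_pow_mul_le hρ hB n le_rfl hx0.le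
    rw [moment]
    convert this using 1
    ring
  have hincr : |moment ρ n y - moment ρ n x| ≤ y ^ n * (R + B * y) * (y - x) := by
    rw [moment, moment, integral_interval_sub_left (hint y hy0.le) (hint x hx0.le)]
    exact abs_integral_pow_mul_le hρ hB n hx0.le hxy
  have hlin : ∀ t, 1 ≤ t → R + B * t ≤ (R + B) * t := fun t ht => by nlinarith
  set a := moment ρ n x
  set b := moment ρ n y
  calc |a / x ^ (n + 2) - b / y ^ (n + 2)|
      = |a * ((x ^ (n + 2))⁻¹ - (y ^ (n + 2))⁻¹) - (b - a) / y ^ (n + 2)| := by ring_nf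
    _ ≤ |a| * |(x ^ (n + 2))⁻¹ - (y ^ (n + 2))⁻¹| + |b - a| / y ^ (n + 2) := by
      rw [← abs_mul, ← abs_of_pos (pow_pos hy0 (n + 2)), ← abs_div,
        abs_of_pos (pow_pos hy0 (n + 2))]
      exact abs_sub _ _
    _ ≤ x ^ (n + 1) * (R + B * x) * ((n + 2 : ℕ) * (y - x) / x ^ (n + 2 + 1)) +
        y ^ n * (R + B * y) * (y - x) / y ^ (n + 2) := by
      gcongr
      exact abs_inv_pow_sub_inv_pow_le hx0 hxy _
    _ = (n + 2) * (R + B * x) * (y - x) / x ^ 2 + (R + B * y) * (y - x) / y ^ 2 := by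
      push_cast
      field_simp
      ring
    _ ≤ (n + 2) * ((R + B) * x) * (y - x) / x ^ 2 + (R + B) * y * (y - x) / y ^ 2 := by
      gcongr
      · exact hlin x hx
      · exact hlin y (hx.trans hxy)
    _ = (n + 2) * (R + B) * (y - x) / x + (R + B) * (y - x) / y := by
      field_simp
    _ ≤ (n + 2) * (R + B) * (y - x) / x + (R + B) * (y - x) / x := by
      gcongr
    _ = (n + 3) * (R + B) * (y - x) / x := by ring

end LinearGrowth

lemma six_div_cube_mul_integral_eq_moment {ρ : ℝ → ℝ} {x : ℝ} (hx : x ≠ 0)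
    (hint : IntervalIntegrable ρ volume 0 x) :
    6 / x ^ 3 * ∫ t in (0 : ℝ)..x, (2 * t - x) * ρ t =
      12 * (moment ρ 1 x / x ^ (1 + 2)) - 6 * (moment ρ 0 x / x ^ (0 + 2)) := by
  have h0 : IntervalIntegrable (fun t => t ^ 0 * ρ t) volume 0 x := by simpa using hint
  have h1 : IntervalIntegrable (fun t => t ^ 1 * ρ t) volume 0 x :=
    hint.continuousOn_mul (by fun_prop)
  have hsplit : ∫ t in (0 : ℝ)..x, (2 * t - x) * ρ t = 2 * moment ρ 1 x - x * moment ρ 0 x := by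
    rw [moment, moment, ← intervalIntegral.integral_const_mul,
      ← intervalIntegral.integral_const_mul, ← integral_sub (h1.const_mul 2) (h0.const_mul x)]
    congr 1 with t
    ring
  rw [hsplit]
  field_simp
  ring

theorem stmt8_general (ρ : ℝ → ℝ) (hmeas : Measurable ρ) (A B : ℝ)
    (h : ∀ x y : ℝ, 0 ≤ x → 0 ≤ y → |ρ x - ρ y| ≤ A + B * |x - y|)
    (lam : ℝ)
    (M : ℝ → ℝ)
    (hM : ∀ x : ℝ, 0 < x → M x = 6 / x ^ 3 * ∫ t in (0:ℝ)..x, (2 * t - x) * ρ t) :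
    ∃ C : ℝ, ∀ x y : ℝ, 1 ≤ x → x ≤ y → y ≤ x + lam → |M x - M y| ≤ C / x := by
  set R := |ρ 0| + |A|
  have hρ (t : ℝ) (ht : 0 ≤ t) : |ρ t| ≤ R + |B| * t := abs_le_of_abs_sub_le_add_mul h ht
  have hM' (x : ℝ) (hx : 1 ≤ x) :
      M x = 12 * (moment ρ 1 x / x ^ (1 + 2)) - 6 * (moment ρ 0 x / x ^ (0 + 2)) := by
    have hx0 : 0 < x := one_pos.trans_le hx
    rw [hM x hx0, six_div_cube_mul_integral_eq_moment hx0.ne'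
      (intervalIntegrable_of_abs_le_linear hρ hmeas.aestronglyMeasurable le_rfl hx0.le)]
  refine ⟨66 * (R + |B|) * lam, fun x y hx hxy hyl => ?_⟩
  have h1 := abs_moment_div_pow_sub_le hρ hmeas.aestronglyMeasurable (by positivity)
    (abs_nonneg B) 1 hx hxy
  have h0 := abs_moment_div_pow_sub_le hρ hmeas.aestronglyMeasurable (by positivity)
    (abs_nonneg B) 0 hx hxy
  push_cast at h1 h0
  set d₁ := moment ρ 1 x / x ^ (1 + 2) - moment ρ 1 y / y ^ (1 + 2)
  set d₀ := moment ρ 0 x / x ^ (0 + 2) - moment ρ 0 y / y ^ (0 + 2)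
  have hsplit : M x - M y = 12 * d₁ - 6 * d₀ := by
    rw [hM' x hx, hM' y (hx.trans hxy)]
    ring
  calc |M x - M y| ≤ 12 * |d₁| + 6 * |d₀| := by
        rw [hsplit]
        refine (abs_sub _ _).trans_eq ?_
        rw [abs_mul, abs_mul, abs_of_pos (by norm_num : (0 : ℝ) < 12),
          abs_of_pos (by norm_num : (0 : ℝ) < 6)]
    _ ≤ 12 * ((1 + 3) * (R + |B|) * (y - x) / x) +
          6 * ((0 + 3) * (R + |B|) * (y - x) / x) := by gcongr
    _ = 66 * (R + |B|) * (y - x) / x := by ring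
    _ ≤ 66 * (R + |B|) * lam / x := by gcongr; linarith

theorem stmt8 (ρ : ℝ → ℝ) (hmeas : Measurable ρ) (A B : ℝ)
    (h : ∀ x y : ℝ, 0 ≤ x → 0 ≤ y → |ρ x - ρ y| ≤ A + B * |x - y|)
    (lam : ℝ) (hlam : 0 < lam)
    (M : ℝ → ℝ)
    (hM : ∀ x : ℝ, 0 < x → M x = 6 / x ^ 3 * ∫ t in (0:ℝ)..x, (2 * t - x) * ρ t) :
    ∃ C : ℝ, ∀ x y : ℝ, 1 ≤ x → x ≤ y → y ≤ x + lam → |M x - M y| ≤ C / x :=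
  stmt8_general ρ hmeas A B h lam M hM
end

section
/- Define a_k ∈ [0,1] by a₁ = 30/47 and, for n ∈ ℕ, a_k = 0 if 48ⁿ < k ≤ 12·48ⁿ, a_k = 1 if 12·48ⁿ < k ≤ 36·48ⁿ, and a_k = 1/2 if 36·48ⁿ < k ≤ 48·48ⁿ. Then for every n ≥ 1, (1/48ⁿ) Σ_{k=1}^{48ⁿ} a_k = 30/47. -/
theorem stmt12 (a : ℕ → ℝ) (hrange : ∀ k, 0 ≤ a k ∧ a k ≤ 1)
    (h1 : a 1 = 30 / 47)
    (h0 : ∀ n k : ℕ, 48 ^ n < k → k ≤ 12 * 48 ^ n → a k = 0)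
    (hone : ∀ n k : ℕ, 12 * 48 ^ n < k → k ≤ 36 * 48 ^ n → a k = 1)
    (hhalf : ∀ n k : ℕ, 36 * 48 ^ n < k → k ≤ 48 * 48 ^ n → a k = 1 / 2)
    (n : ℕ) (hn : 1 ≤ n) :
    (1 / (48 : ℝ) ^ n) * ∑ k ∈ Finset.Icc 1 (48 ^ n), a k = 30 / 47 := by
  have key : ∀ m : ℕ, ∑ k ∈ Finset.Ioc (48 ^ m) (48 * 48 ^ m), a k = 30 * (48 : ℝ) ^ m := by
    intro m
    have hp1 : 1 ≤ (48 : ℕ) ^ m := Nat.one_le_pow _ _ (by norm_num)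
    set p := (48 : ℕ) ^ m with hpdef
    rw [← Finset.sum_Ioc_consecutive a (show p ≤ 12 * p by omega) (show 12 * p ≤ 48 * p by omega),
        ← Finset.sum_Ioc_consecutive a (show 12 * p ≤ 36 * p by omega)
          (show 36 * p ≤ 48 * p by omega)]
    have A : ∑ k ∈ Finset.Ioc p (12 * p), a k = 0 := by
      apply Finset.sum_eq_zero
      intro k hk
      rw [Finset.mem_Ioc] at hk
      exact h0 m k hk.1 hk.2
    have B : ∑ k ∈ Finset.Ioc (12 * p) (36 * p), a k = 24 * (48 : ℝ) ^ m := by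
      rw [show ∑ k ∈ Finset.Ioc (12 * p) (36 * p), a k
            = ∑ _k ∈ Finset.Ioc (12 * p) (36 * p), (1 : ℝ) from
          Finset.sum_congr rfl fun k hk => hone m k (Finset.mem_Ioc.mp hk).1
            (Finset.mem_Ioc.mp hk).2]
      rw [Finset.sum_const, Nat.card_Ioc]
      have : 36 * p - 12 * p = 24 * p := by omega
      rw [this, nsmul_eq_mul, hpdef]
      push_cast
      ring
    have C : ∑ k ∈ Finset.Ioc (36 * p) (48 * p), a k = 6 * (48 : ℝ) ^ m := by
      rw [show ∑ k ∈ Finset.Ioc (36 * p) (48 * p), a k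
            = ∑ _k ∈ Finset.Ioc (36 * p) (48 * p), (1 / 2 : ℝ) from
          Finset.sum_congr rfl fun k hk => hhalf m k (Finset.mem_Ioc.mp hk).1
            (Finset.mem_Ioc.mp hk).2]
      rw [Finset.sum_const, Nat.card_Ioc]
      have : 48 * p - 36 * p = 12 * p := by omega
      rw [this, nsmul_eq_mul, hpdef]
      push_cast
      ring
    rw [A, B, C]; ring
  have hIcc : ∀ m : ℕ, Finset.Icc 1 m = Finset.Ioc 0 m := by
    intro m; ext k; simp [Nat.lt_iff_add_one_le]
  rw [hIcc]
  have main : ∀ n : ℕ, 1 ≤ n →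
      ∑ k ∈ Finset.Ioc 0 (48 ^ n), a k = 30 / 47 * (48 : ℝ) ^ n := by
    intro n hn
    induction n, hn using Nat.le_induction with
    | base =>
      rw [← Finset.sum_Ioc_consecutive a (show 0 ≤ 1 by omega) (show 1 ≤ 48 ^ 1 by norm_num)]
      have : Finset.Ioc 0 1 = {1} := rfl
      rw [this, Finset.sum_singleton, h1]
      have := key 0
      norm_num at this ⊢
      rw [this]; ring
    | succ m hm ih =>
      have hp1 : 1 ≤ (48 : ℕ) ^ m := Nat.one_le_pow _ _ (by norm_num)
      rw [← Finset.sum_Ioc_consecutive a (show 0 ≤ 48 ^ m by omega)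
        (show 48 ^ m ≤ 48 ^ (m + 1) by rw [pow_succ]; omega)]
      have hpow : (48 : ℕ) ^ (m + 1) = 48 * 48 ^ m := by rw [pow_succ]; ring
      rw [hpow, ih, key m]
      push_cast
      ring
  rw [main n hn]
  have : (48 : ℝ) ^ n ≠ 0 := by positivity
  field_simp
end

section
/- With the sequence a_k as above (a₁ = 30/47; a_k = 0 on (48ⁿ, 12·48ⁿ], a_k = 1 on (12·48ⁿ, 36·48ⁿ], a_k = 1/2 on (36·48ⁿ, 48^{n+1}]), one has limsup_{n→∞} (1/n) Σ_{k=1}^{n} a_k = 193/282. -/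
/-!
On the block `(48ⁿ, 48ⁿ⁺¹]` the partial sums `S N = ∑_{k ≤ N} a k` are piecewise linear in
`N` with slopes `0, 1, 1/2`, and `S (48ⁿ) = (30/47)·48ⁿ` by induction on `n`. Hence the ratio
`S N / N` first drops, then climbs while `a = 1`, and then decreases again because
`1/2 < 193/282`; its maximum over the block is attained at `N = 36·48ⁿ`, where
`S N = (193/282) N` exactly. So the averages never exceed `193/282` and equal it infinitely often.
-/

open Filter Finset

theorem Filter.limsup_eq_of_forall_le_of_frequently_ge {ι α : Type*}
    [ConditionallyCompleteLinearOrder α] {l : Filter ι} {u : ι → α} {c : α}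
    (hle : ∀ i, u i ≤ c) (hge : ∃ᶠ i in l, c ≤ u i) : limsup u l = c :=
  le_antisymm
    (limsup_le_of_le (IsCoboundedUnder.of_frequently_ge hge) (Eventually.of_forall hle))
    (le_limsup_of_frequently_le hge (isBoundedUnder_of ⟨c, hle⟩))

theorem Finset.sum_Icc_one_of_eq_on_Ioc {R : Type*} [CommRing R] {f : ℕ → R} {m M : ℕ} {c : R}
    (hmM : m ≤ M) (hf : ∀ k, m < k → k ≤ M → f k = c) :
    ∑ k ∈ Icc 1 M, f k = ∑ k ∈ Icc 1 m, f k + c * (M - m) := by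
  have hsplit : ∑ k ∈ Icc 1 M, f k = ∑ k ∈ Icc 1 m, f k + ∑ k ∈ Ioc m M, f k := by
    rw [← zero_add 1, Icc_add_one_left_eq_Ioc, Icc_add_one_left_eq_Ioc,
      sum_Ioc_consecutive f (Nat.zero_le m) hmM]
  rw [hsplit, sum_congr rfl fun k hk ↦ hf k (mem_Ioc.1 hk).1 (mem_Ioc.1 hk).2, sum_const,
    Nat.card_Ioc, nsmul_eq_mul, Nat.cast_sub hmM, mul_comm]

structure IsBlockSequence (a : ℕ → ℝ) : Prop where
  one : a 1 = 30 / 47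
  zero_block : ∀ n k : ℕ, 48 ^ n < k → k ≤ 12 * 48 ^ n → a k = 0
  one_block : ∀ n k : ℕ, 12 * 48 ^ n < k → k ≤ 36 * 48 ^ n → a k = 1
  half_block : ∀ n k : ℕ, 36 * 48 ^ n < k → k ≤ 48 * 48 ^ n → a k = 1 / 2

namespace IsBlockSequence

variable {a : ℕ → ℝ}

theorem sum_Icc_eq_of_mem_zero_block (ha : IsBlockSequence a) {n N : ℕ} (hlo : 48 ^ n ≤ N)
    (hhi : N ≤ 12 * 48 ^ n) :
    ∑ k ∈ Icc 1 N, a k = ∑ k ∈ Icc 1 (48 ^ n), a k := by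
  rw [sum_Icc_one_of_eq_on_Ioc hlo fun k hk hk' ↦ ha.zero_block n k hk (hk'.trans hhi)]
  ring

theorem sum_Icc_eq_of_mem_one_block (ha : IsBlockSequence a) {n N : ℕ}
    (hlo : 12 * 48 ^ n ≤ N) (hhi : N ≤ 36 * 48 ^ n) :
    ∑ k ∈ Icc 1 N, a k = ∑ k ∈ Icc 1 (48 ^ n), a k + (N - 12 * 48 ^ n) := by
  rw [sum_Icc_one_of_eq_on_Ioc hlo fun k hk hk' ↦ ha.one_block n k hk (hk'.trans hhi),
    ha.sum_Icc_eq_of_mem_zero_block (by omega) le_rfl]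
  push_cast
  ring

theorem sum_Icc_eq_of_mem_half_block (ha : IsBlockSequence a) {n N : ℕ}
    (hlo : 36 * 48 ^ n ≤ N) (hhi : N ≤ 48 * 48 ^ n) :
    ∑ k ∈ Icc 1 N, a k = ∑ k ∈ Icc 1 (48 ^ n), a k + 24 * 48 ^ n + (N - 36 * 48 ^ n) / 2 := by
  rw [sum_Icc_one_of_eq_on_Ioc hlo fun k hk hk' ↦ ha.half_block n k hk (hk'.trans hhi),
    ha.sum_Icc_eq_of_mem_one_block (by omega) le_rfl]
  push_cast
  ring

theorem sum_Icc_pow (ha : IsBlockSequence a) (n : ℕ) :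
    ∑ k ∈ Icc 1 (48 ^ n), a k = 30 / 47 * 48 ^ n := by
  induction n with
  | zero => simpa using ha.one
  | succ n ih =>
    rw [pow_succ', ha.sum_Icc_eq_of_mem_half_block (by omega) le_rfl, ih]
    push_cast
    ring

theorem sum_Icc_thirtysix_mul_pow (ha : IsBlockSequence a) (n : ℕ) :
    ∑ k ∈ Icc 1 (36 * 48 ^ n), a k = 193 / 282 * (36 * 48 ^ n : ℕ) := by
  rw [ha.sum_Icc_eq_of_mem_one_block (by omega) le_rfl, ha.sum_Icc_pow]
  push_cast
  ring

theorem sum_Icc_le (ha : IsBlockSequence a) (N : ℕ) :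
    ∑ k ∈ Icc 1 N, a k ≤ 193 / 282 * N := by
  rcases Nat.eq_zero_or_pos N with rfl | hN
  · simp
  set n := Nat.log 48 N
  have hlo : 48 ^ n ≤ N := Nat.pow_log_le_self 48 hN.ne'
  have hhi : N ≤ 48 * 48 ^ n := (pow_succ' 48 n ▸ Nat.lt_pow_succ_log_self (by norm_num) N).le
  have hx : (48 ^ n : ℝ) ≤ N := by exact_mod_cast hlo
  rcases le_total N (12 * 48 ^ n) with h12 | h12
  · rw [ha.sum_Icc_eq_of_mem_zero_block hlo h12, ha.sum_Icc_pow]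
    linarith
  rcases le_total N (36 * 48 ^ n) with h36 | h36
  · have : (N : ℝ) ≤ 36 * 48 ^ n := by exact_mod_cast h36
    rw [ha.sum_Icc_eq_of_mem_one_block h12 h36, ha.sum_Icc_pow]
    linarith
  · have : 36 * 48 ^ n ≤ (N : ℝ) := by exact_mod_cast h36
    rw [ha.sum_Icc_eq_of_mem_half_block h36 hhi, ha.sum_Icc_pow]
    linarith

end IsBlockSequence

theorem stmt13_general (a : ℕ → ℝ)
    (h1 : a 1 = 30 / 47)
    (h0 : ∀ n k : ℕ, 48 ^ n < k → k ≤ 12 * 48 ^ n → a k = 0)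
    (hone : ∀ n k : ℕ, 12 * 48 ^ n < k → k ≤ 36 * 48 ^ n → a k = 1)
    (hhalf : ∀ n k : ℕ, 36 * 48 ^ n < k → k ≤ 48 * 48 ^ n → a k = 1 / 2) :
    Filter.atTop.limsup (fun n : ℕ => (1 / (n : ℝ)) * ∑ k ∈ Finset.Icc 1 n, a k)
      = 193 / 282 := by
  have ha : IsBlockSequence a := ⟨h1, h0, hone, hhalf⟩
  refine limsup_eq_of_forall_le_of_frequently_ge (fun N ↦ ?_) ?_
  · rcases Nat.eq_zero_or_pos N with rfl | hN
    · norm_num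
    rw [one_div_mul_eq_div, div_le_iff₀ (by exact_mod_cast hN)]
    exact ha.sum_Icc_le N
  · refine frequently_atTop.2 fun n ↦ ⟨36 * 48 ^ n, ?_, ?_⟩
    · have := Nat.lt_pow_self (n := n) (by norm_num : 1 < 48)
      omega
    · rw [one_div_mul_eq_div, le_div_iff₀ (by positivity), ha.sum_Icc_thirtysix_mul_pow]

theorem stmt13 (a : ℕ → ℝ) (hrange : ∀ k, 0 ≤ a k ∧ a k ≤ 1)
    (h1 : a 1 = 30 / 47)
    (h0 : ∀ n k : ℕ, 48 ^ n < k → k ≤ 12 * 48 ^ n → a k = 0)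
    (hone : ∀ n k : ℕ, 12 * 48 ^ n < k → k ≤ 36 * 48 ^ n → a k = 1)
    (hhalf : ∀ n k : ℕ, 36 * 48 ^ n < k → k ≤ 48 * 48 ^ n → a k = 1 / 2) :
    Filter.atTop.limsup (fun n : ℕ => (1 / (n : ℝ)) * ∑ k ∈ Finset.Icc 1 n, a k)
      = 193 / 282 :=
  stmt13_general a h1 h0 hone hhalf
end

section
/- Let F : [0,∞) → ℝ satisfy |F(x) − F(y)| ≤ A + B|x − y| for all x, y, let (x_n) be a sequence with x_n → ∞ and lim_{n→∞} x_{n+1}/x_n = 1 and x_n ≥ 1. Then the set of accumulation points in [−∞, ∞] of the sequence n ↦ F(x_n)/x_n equals the set of accumulation points of the net x ↦ F(x)/x as x → ∞. -/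
open Filter Topology

private lemma keyineq (A B a b f1 u t : ℝ) (hu : 1 ≤ u) (hut : u ≤ t)
    (h1 : |a - b| ≤ A + B * (t - u)) (h2 : |b - f1| ≤ A + B * (t - 1)) (hA : 0 ≤ A) :
    |a / u - b / t| ≤ A / u + (2 * |B| + |f1| + A) * (t / u - 1) := by
  have hu0 : (0:ℝ) < u := by linarith
  have ht0 : (0:ℝ) < t := by linarith
  have hexp : A / u + (2 * |B| + |f1| + A) * (t / u - 1)
      = (A * t + (2 * |B| + |f1| + A) * ((t - u) * t)) / (u * t) := by
    field_simp
  rw [hexp, div_sub_div _ _ hu0.ne' ht0.ne', abs_div, abs_of_pos (mul_pos hu0 ht0),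
    div_le_div_iff_of_pos_right (mul_pos hu0 ht0)]
  have htu : 0 ≤ t - u := by linarith
  obtain ⟨h1l, h1r⟩ := abs_le.1 h1
  obtain ⟨h2l, h2r⟩ := abs_le.1 h2
  have hb : b ≤ |f1| + A + |B| * t := by
    nlinarith [le_abs_self f1, le_abs_self B, neg_abs_le B, abs_nonneg B,
      mul_le_mul_of_nonneg_right (le_abs_self B) (by linarith : (0:ℝ) ≤ t - 1)]
  have hb' : -b ≤ |f1| + A + |B| * t := by
    nlinarith [neg_abs_le f1, le_abs_self B, neg_abs_le B, abs_nonneg B,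
      mul_le_mul_of_nonneg_right (le_abs_self B) (by linarith : (0:ℝ) ≤ t - 1)]
  rw [abs_le]
  constructor <;>
  nlinarith [mul_le_mul_of_nonneg_right h1r ht0.le, mul_le_mul_of_nonneg_right h1l ht0.le,
    mul_le_mul_of_nonneg_right hb htu, mul_le_mul_of_nonneg_right hb' htu,
    mul_le_mul_of_nonneg_right (le_abs_self B) (mul_nonneg htu ht0.le),
    mul_le_mul_of_nonneg_right (neg_abs_le B) (mul_nonneg htu ht0.le),
    mul_le_mul_of_nonneg_right (mul_le_mul_of_nonneg_right hb htu) ht0.le,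
    abs_nonneg f1, abs_nonneg B, mul_nonneg (mul_nonneg (abs_nonneg B) htu) (by linarith : (0:ℝ) ≤ t - 1),
    mul_nonneg (mul_nonneg (add_nonneg (abs_nonneg f1) hA) htu) (by linarith : (0:ℝ) ≤ t - 1)]

private lemma ereal_shift (a b : ℕ → ℝ) (c : EReal)
    (ha : Tendsto (fun k => ((a k : ℝ) : EReal)) atTop (𝓝 c))
    (hd : Tendsto (fun k => b k - a k) atTop (𝓝 0)) :
    Tendsto (fun k => ((b k : ℝ) : EReal)) atTop (𝓝 c) := by
  induction c with
  | bot =>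
    rw [EReal.tendsto_nhds_bot_iff_real] at ha ⊢
    intro X
    have h2 : ∀ᶠ k in atTop, b k - a k < 1 := hd.eventually (Iio_mem_nhds one_pos)
    filter_upwards [ha (X - 1), h2] with k hk1 hk2
    have hk1' : a k < X - 1 := by exact_mod_cast hk1
    exact_mod_cast (by linarith : b k < X)
  | coe r =>
    rw [EReal.tendsto_coe] at ha ⊢
    have := hd.add ha
    simpa using this
  | top =>
    rw [EReal.tendsto_nhds_top_iff_real] at ha ⊢
    intro X
    have h2 : ∀ᶠ k in atTop, -1 < b k - a k := hd.eventually (Ioi_mem_nhds (by norm_num))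
    filter_upwards [ha (X + 1), h2] with k hk1 hk2
    have hk1' : X + 1 < a k := by exact_mod_cast hk1
    exact_mod_cast (by linarith : X < b k)

theorem stmt19 (F : ℝ → ℝ) (A B : ℝ)
    (h : ∀ u v : ℝ, 0 ≤ u → 0 ≤ v → |F u - F v| ≤ A + B * |u - v|)
    (x : ℕ → ℝ) (hx1 : ∀ n, 1 ≤ x n) (hx : Tendsto x atTop atTop)
    (hratio : Tendsto (fun n => x (n + 1) / x n) atTop (nhds 1)) :
    {c : EReal | MapClusterPt c atTop (fun n : ℕ => ((F (x n) / x n : ℝ) : EReal))}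
      = {c : EReal | MapClusterPt c atTop (fun t : ℝ => ((F t / t : ℝ) : EReal))} := by
  have hA : 0 ≤ A := by have := h 1 1 zero_le_one zero_le_one; simpa using this
  set g : ℝ → EReal := fun t : ℝ => ((F t / t : ℝ) : EReal) with hg
  -- the index function
  set S : ℝ → Set ℕ := fun s => {n | x n ≤ s} with hS
  have hbdd : ∀ s, BddAbove (S s) := by
    intro s
    obtain ⟨N, hN⟩ := (tendsto_atTop.1 hx (s + 1)).exists_forall_of_atTop
    refine ⟨N, fun n hn => ?_⟩
    by_contra hlt
    have h1 := hN n (by omega : N ≤ n)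
    have h2 : x n ≤ s := hn
    linarith
  set nt : ℝ → ℕ := fun s => sSup (S s) with hnt
  have fact2 : ∀ s, x 0 ≤ s → x (nt s) ≤ s := by
    intro s hs
    exact Nat.sSup_mem ⟨0, hs⟩ (hbdd s)
  have fact3 : ∀ s, x 0 ≤ s → s < x (nt s + 1) := by
    intro s hs
    by_contra hcon
    have hmem : nt s + 1 ∈ S s := le_of_not_gt hcon
    have h6 := le_csSup (hbdd s) hmem
    have hrw : sSup (S s) = nt s := rfl
    omega
  have fact4 : ∀ N s, x N ≤ s → N ≤ nt s := fun N s hNs => le_csSup (hbdd s) hNs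
  have h5 : Tendsto nt atTop atTop :=
    tendsto_atTop.2 fun N => (eventually_ge_atTop (x N)).mono fun s hs => fact4 N s hs
  have hu : Tendsto (fun s => x (nt s)) atTop atTop := hx.comp h5
  have hr : Tendsto (fun s => s / x (nt s)) atTop (𝓝 1) := by
    have hupper : Tendsto (fun s => x (nt s + 1) / x (nt s)) atTop (𝓝 1) := hratio.comp h5
    apply tendsto_of_tendsto_of_tendsto_of_le_of_le' tendsto_const_nhds hupper
    · filter_upwards [eventually_ge_atTop (x 0)] with s hs
      have h0 : (0:ℝ) < x (nt s) := lt_of_lt_of_le one_pos (hx1 _)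
      exact (one_le_div h0).2 (fact2 s hs)
    · filter_upwards [eventually_ge_atTop (x 0)] with s hs
      have h0 : (0:ℝ) < x (nt s) := lt_of_lt_of_le one_pos (hx1 _)
      have := (fact3 s hs).le
      gcongr
  -- the difference tends to 0
  have hdiff : Tendsto (fun s => F (x (nt s)) / x (nt s) - F s / s) atTop (𝓝 0) := by
    have hbound : Tendsto
        (fun s => A / x (nt s) + (2 * |B| + |F 1| + A) * (s / x (nt s) - 1)) atTop (𝓝 0) := by
      have h1 : Tendsto (fun s => A / x (nt s)) atTop (𝓝 0) := tendsto_const_nhds.div_atTop hu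
      have h2 : Tendsto (fun s => s / x (nt s) - 1) atTop (𝓝 0) := by
        simpa using hr.sub_const 1
      have := h1.add (h2.const_mul (2 * |B| + |F 1| + A))
      simpa using this
    apply squeeze_zero_norm' _ hbound
    filter_upwards [eventually_ge_atTop (x 0), eventually_ge_atTop (1:ℝ)] with s hs hs1
    have hu1 : 1 ≤ x (nt s) := hx1 _
    have hut : x (nt s) ≤ s := fact2 s hs
    have hx0 : (0:ℝ) ≤ x (nt s) := by linarith
    have hs0 : (0:ℝ) ≤ s := by linarith
    have hh1 := h (x (nt s)) s hx0 hs0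
    rw [abs_of_nonpos (by linarith : x (nt s) - s ≤ 0)] at hh1
    have hh2 := h s 1 hs0 zero_le_one
    rw [abs_of_nonneg (by linarith : (0:ℝ) ≤ s - 1)] at hh2
    have := keyineq A B (F (x (nt s))) (F s) (F 1) (x (nt s)) s hu1 hut
      (by linarith [hh1] : |F (x (nt s)) - F s| ≤ A + B * (s - x (nt s))) hh2 hA
    simpa [Real.norm_eq_abs] using this
  -- now prove the set equality
  ext c
  simp only [Set.mem_setOf_eq]
  constructor
  · intro hc
    exact MapClusterPt.of_comp hx hc
  · intro hc
    have hne : ((atTop : Filter ℝ) ⊓ comap g (𝓝 c)).NeBot := by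
      rw [← Filter.map_neBot_iff g, Filter.push_pull, inf_comm]
      exact hc
    obtain ⟨t, ht⟩ := exists_seq_tendsto ((atTop : Filter ℝ) ⊓ comap g (𝓝 c))
    rw [tendsto_inf] at ht
    obtain ⟨ht1, ht2⟩ := ht
    rw [tendsto_comap_iff] at ht2
    have ht2' : Tendsto (fun k => ((F (t k) / t k : ℝ) : EReal)) atTop (𝓝 c) := ht2
    have hm : Tendsto (fun k => nt (t k)) atTop atTop := h5.comp ht1
    have hd : Tendsto (fun k => F (x (nt (t k))) / x (nt (t k)) - F (t k) / t k)
        atTop (𝓝 0) := hdiff.comp ht1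
    have hb : Tendsto (fun k => ((F (x (nt (t k))) / x (nt (t k)) : ℝ) : EReal))
        atTop (𝓝 c) :=
      ereal_shift (fun k => F (t k) / t k) (fun k => F (x (nt (t k))) / x (nt (t k))) c ht2' hd
    exact MapClusterPt.of_comp hm hb.mapClusterPt
end
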